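/- (Offset boundary of the initial weights.) Let 𝓓 and Q be probability measures on ℝ^d, let W^V ∈ ℝ^{m×d} with ‖W^V‖_F ≤ M_V, let W^K ∈ ℝ^{k×d}, and let φ : ℝ^k → ℝ^r be measurable with ‖x‖ ≤ M_x and ‖φ(W^K x)‖ ≤ M_φ holding almost everywhere under both 𝓓 and Q. Write φ̃(x) := φ(W^K x), M_Q := 𝔼_{x∼Q}[ x φ̃(x)ᵀ ] ∈ ℝ^{d×r}, M_D := 𝔼_{x∼𝓓}[ x φ̃(x)ᵀ ] ∈ ℝ^{d×r}, and suppose Σ_φ := 𝔼_{x∼𝓓}[ φ̃(x) φ̃(x)ᵀ ] is invertible. Let η > 0, let 𝔼[W₀] := η W^V M_Q denote the expectation of the one-step distilled weight W₀ = (η/N) Σᵢ W^V xᵢ φ̃(xᵢ)ᵀ built from i.i.d. demonstrations xᵢ ∼ Q, and let W* := W^V M_D Σ_φ^{−1} be the optimal reference weight. Then the offset ΔW := 𝔼[W₀] − W* satisfies ‖ΔW‖_F ≤ M_V ( M_x M_φ ‖η I_r − Σ_φ^{−1}‖₂ + ‖Σ_φ^{−1}‖₂ ‖M_Q − M_D‖_F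 ). -/

import Mathlib

open scoped BigOperators
open MeasureTheory

/-- The Frobenius norm of a real matrix. -/
noncomputable def frobNorm {m r : ℕ} (A : Matrix (Fin m) (Fin r) ℝ) : ℝ :=
  Real.sqrt (∑ a, ∑ s, (A a s) ^ 2)

/-- The spectral (ℓ²-operator) norm of a square real matrix. -/
noncomputable def specNorm {r : ℕ} (A : Matrix (Fin r) (Fin r) ℝ) : ℝ :=
  ‖LinearMap.toContinuousLinearMap (Matrix.toEuclideanLin A)‖

/-- The mapped feature vector `φ̃(x) = φ(W^K x)`. -/
noncomputable def featOut {k r d : ℕ} (WK : Matrix (Fin k) (Fin d) ℝ)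
    (φ : EuclideanSpace ℝ (Fin k) → EuclideanSpace ℝ (Fin r))
    (x : EuclideanSpace ℝ (Fin d)) : EuclideanSpace ℝ (Fin r) :=
  φ (WithLp.toLp 2 (fun c => ∑ b, WK c b * x b))

/-!
Expanding the definitions gives
`ΔW = W^V (M_Q (η I − Σ_φ⁻¹) + (M_Q − M_D) Σ_φ⁻¹)`.
The Frobenius norm is submultiplicative and satisfies `‖A B‖_F ≤ ‖A‖_F ‖B‖₂`, so it remains
to bound `‖M_Q‖_F ≤ M_x M_φ`: `M_Q` is the mean of the rank-one matrices `x φ̃(x)ᵀ`, whose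
Frobenius norm is `‖x‖ ‖φ̃(x)‖ ≤ M_x M_φ`.
-/

open WithLp

section Frobenius

variable {m n r : ℕ}

lemma frobNorm_nonneg (A : Matrix (Fin m) (Fin r) ℝ) : 0 ≤ frobNorm A :=
  Real.sqrt_nonneg _

section FrobeniusInstance

attribute [local instance] Matrix.frobeniusSeminormedAddCommGroup

lemma frobNorm_eq_norm (A : Matrix (Fin m) (Fin r) ℝ) : frobNorm A = ‖A‖ := by
  simp [frobNorm, Matrix.frobenius_norm_def, Real.sqrt_eq_rpow]

lemma frobNorm_add_le (A B : Matrix (Fin m) (Fin r) ℝ) :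
    frobNorm (A + B) ≤ frobNorm A + frobNorm B := by
  simpa only [frobNorm_eq_norm] using norm_add_le A B

lemma frobNorm_mul_le (A : Matrix (Fin m) (Fin n) ℝ) (B : Matrix (Fin n) (Fin r) ℝ) :
    frobNorm (A * B) ≤ frobNorm A * frobNorm B := by
  simpa only [frobNorm_eq_norm] using Matrix.frobenius_norm_mul A B

end FrobeniusInstance

lemma frobNorm_eq_norm_uncurry (A : Matrix (Fin m) (Fin r) ℝ) :
    frobNorm A = ‖(toLp 2 fun p : Fin m × Fin r => A p.1 p.2 : EuclideanSpace ℝ _)‖ := by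
  simp [frobNorm, EuclideanSpace.norm_eq, Fintype.sum_prod_type]

lemma frobNorm_eq_sqrt_sum_norm_row_sq (A : Matrix (Fin m) (Fin r) ℝ) :
    frobNorm A = √(∑ a, ‖(toLp 2 (A a) : EuclideanSpace ℝ (Fin r))‖ ^ 2) := by
  simp [frobNorm, EuclideanSpace.real_norm_sq_eq]

end Frobenius

section Spectral

open scoped Matrix Matrix.Norms.L2Operator

variable {m r : ℕ}

lemma specNorm_nonneg (A : Matrix (Fin r) (Fin r) ℝ) : 0 ≤ specNorm A :=
  norm_nonneg _

lemma norm_row_mul_le_specNorm_mul (A : Matrix (Fin m) (Fin r) ℝ) (B : Matrix (Fin r) (Fin r) ℝ)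
    (a : Fin m) :
    ‖(toLp 2 ((A * B) a) : EuclideanSpace ℝ (Fin r))‖
      ≤ specNorm B * ‖(toLp 2 (A a) : EuclideanSpace ℝ (Fin r))‖ := by
  have hrow : (A * B) a = Bᴴ *ᵥ A a := by
    ext s
    simp [Matrix.mul_apply, Matrix.mulVec, dotProduct, mul_comm]
  have hB : ‖Bᴴ‖ = specNorm B := Matrix.l2_opNorm_conjTranspose B
  rw [hrow, ← hB]
  exact Matrix.l2_opNorm_mulVec Bᴴ (toLp 2 (A a))

lemma frobNorm_mul_le_frobNorm_mul_specNorm (A : Matrix (Fin m) (Fin r) ℝ)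
    (B : Matrix (Fin r) (Fin r) ℝ) : frobNorm (A * B) ≤ frobNorm A * specNorm B := by
  have hrows : ∑ a, ‖(toLp 2 ((A * B) a) : EuclideanSpace ℝ (Fin r))‖ ^ 2
      ≤ specNorm B ^ 2 * ∑ a, ‖(toLp 2 (A a) : EuclideanSpace ℝ (Fin r))‖ ^ 2 := by
    rw [Finset.mul_sum]
    gcongr with a
    rw [← mul_pow]
    exact pow_le_pow_left₀ (norm_nonneg _) (norm_row_mul_le_specNorm_mul A B a) 2
  rw [frobNorm_eq_sqrt_sum_norm_row_sq, frobNorm_eq_sqrt_sum_norm_row_sq, mul_comm,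
    ← Real.sqrt_sq (specNorm_nonneg B), ← Real.sqrt_mul (sq_nonneg _)]
  exact Real.sqrt_le_sqrt hrows

end Spectral

lemma norm_outer_eq_mul_norm {ι κ : Type*} [Fintype ι] [Fintype κ] (x : EuclideanSpace ℝ ι)
    (y : EuclideanSpace ℝ κ) :
    ‖(toLp 2 fun p : ι × κ => x p.1 * y p.2 : EuclideanSpace ℝ _)‖ = ‖x‖ * ‖y‖ := by
  rw [← sq_eq_sq₀ (norm_nonneg _) (by positivity), mul_pow, EuclideanSpace.real_norm_sq_eq,
    EuclideanSpace.real_norm_sq_eq x, EuclideanSpace.real_norm_sq_eq y, Finset.sum_mul_sum,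
    Fintype.sum_prod_type]
  simp [mul_pow]

lemma frobNorm_le_of_entry_eq_integral {α : Type*} [MeasurableSpace α] {d r : ℕ}
    (μ : Measure α) [IsProbabilityMeasure μ]
    {f : α → EuclideanSpace ℝ (Fin d)} {g : α → EuclideanSpace ℝ (Fin r)}
    (hf : Measurable f) (hg : Measurable g) {Cf Cg : ℝ}
    (hfC : ∀ᵐ x ∂μ, ‖f x‖ ≤ Cf) (hgC : ∀ᵐ x ∂μ, ‖g x‖ ≤ Cg)
    (M : Matrix (Fin d) (Fin r) ℝ) (hM : ∀ b s, M b s = ∫ x, f x b * g x s ∂μ) :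
    frobNorm M ≤ Cf * Cg := by
  set G : α → EuclideanSpace ℝ (Fin d × Fin r) := fun x => toLp 2 fun p => f x p.1 * g x p.2
  have hG_le : ∀ᵐ x ∂μ, ‖G x‖ ≤ Cf * Cg := by
    filter_upwards [hfC, hgC] with x hfx hgx
    rw [norm_outer_eq_mul_norm]
    exact mul_le_mul hfx hgx (norm_nonneg _) ((norm_nonneg _).trans hfx)
  have hG_int : Integrable G μ :=
    (integrable_const (Cf * Cg)).mono' (by fun_prop : Measurable G).aestronglyMeasurable hG_le
  have hM_eq : (toLp 2 fun p : Fin d × Fin r => M p.1 p.2 : EuclideanSpace ℝ _) = ∫ x, G x ∂μ := by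
    ext p
    rw [eval_integral_piLp hG_int.eval_piLp]
    exact hM p.1 p.2
  calc frobNorm M = ‖∫ x, G x ∂μ‖ := by rw [frobNorm_eq_norm_uncurry, hM_eq]
    _ ≤ Cf * Cg := by simpa using norm_integral_le_of_norm_le_const hG_le

lemma measurable_featOut {k r d : ℕ} (WK : Matrix (Fin k) (Fin d) ℝ)
    {φ : EuclideanSpace ℝ (Fin k) → EuclideanSpace ℝ (Fin r)} (hφ : Measurable φ) :
    Measurable (featOut WK φ) :=
  hφ.comp (by fun_prop)

lemma smul_mul_sub_mul_mul_eq {R l m n : Type*} [CommRing R] [Fintype m] [Fintype n]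
    [DecidableEq n] (η : R) (V : Matrix l m R) (A B : Matrix m n R) (S : Matrix n n R) :
    η • (V * A) - V * B * S = V * (A * (η • 1 - S) + (A - B) * S) := by
  simp only [Matrix.mul_add, Matrix.mul_sub, Matrix.sub_mul, Matrix.mul_smul,
    Matrix.mul_one, Matrix.mul_assoc]
  abel

theorem offset_boundary_initial_weights_general (d m k r : ℕ)
    (Q : Measure (EuclideanSpace ℝ (Fin d)))
    [IsProbabilityMeasure Q]
    (WV : Matrix (Fin m) (Fin d) ℝ) (M_V : ℝ) (hWV : frobNorm WV ≤ M_V)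
    (WK : Matrix (Fin k) (Fin d) ℝ)
    (φ : EuclideanSpace ℝ (Fin k) → EuclideanSpace ℝ (Fin r)) (hφ : Measurable φ)
    (Mx Mφ : ℝ)
    (hMxQ : ∀ᵐ x ∂Q, ‖x‖ ≤ Mx)
    (hMφQ : ∀ᵐ x ∂Q, ‖featOut WK φ x‖ ≤ Mφ)
    (MQ MD : Matrix (Fin d) (Fin r) ℝ)
    (hMQ : ∀ b s, MQ b s = ∫ x, x b * featOut WK φ x s ∂Q)
    (covφ : Matrix (Fin r) (Fin r) ℝ)
    (η : ℝ)
    (EW₀ Wstar ΔW : Matrix (Fin m) (Fin r) ℝ)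
    (hEW₀ : EW₀ = η • (WV * MQ))
    (hWstar : Wstar = WV * MD * covφ⁻¹)
    (hΔW : ΔW = EW₀ - Wstar) :
    frobNorm ΔW
      ≤ M_V * (Mx * Mφ * specNorm (η • (1 : Matrix (Fin r) (Fin r) ℝ) - covφ⁻¹)
                + specNorm covφ⁻¹ * frobNorm (MQ - MD)) := by
  have hMQ_le : frobNorm MQ ≤ Mx * Mφ :=
    frobNorm_le_of_entry_eq_integral Q measurable_id (measurable_featOut WK hφ) hMxQ hMφQ MQ hMQ
  have hfactor_le : frobNorm (MQ * (η • 1 - covφ⁻¹) + (MQ - MD) * covφ⁻¹)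
      ≤ Mx * Mφ * specNorm (η • 1 - covφ⁻¹) + specNorm covφ⁻¹ * frobNorm (MQ - MD) := by
    calc _ ≤ frobNorm (MQ * (η • 1 - covφ⁻¹)) + frobNorm ((MQ - MD) * covφ⁻¹) :=
          frobNorm_add_le _ _
      _ ≤ frobNorm MQ * specNorm (η • 1 - covφ⁻¹) + frobNorm (MQ - MD) * specNorm covφ⁻¹ :=
          add_le_add (frobNorm_mul_le_frobNorm_mul_specNorm _ _)
            (frobNorm_mul_le_frobNorm_mul_specNorm _ _)
      _ ≤ _ := by
          rw [mul_comm (frobNorm (MQ - MD))]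
          gcongr
          exact specNorm_nonneg _
  rw [hΔW, hEW₀, hWstar, smul_mul_sub_mul_mul_eq]
  exact (frobNorm_mul_le _ _).trans
    (mul_le_mul hWV hfactor_le (frobNorm_nonneg _) ((frobNorm_nonneg WV).trans hWV))

/-- **Offset boundary of the initial weights in the ICL-KD process.**
With `M_Q = 𝔼_Q[x φ̃(x)ᵀ]`, `M_D = 𝔼_𝓓[x φ̃(x)ᵀ]`, invertible `Σ_φ = 𝔼_𝓓[φ̃(x) φ̃(x)ᵀ]`,
expected one-step distilled weight `𝔼[W₀] = η W^V M_Q` and optimal reference weight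
`W* = W^V M_D Σ_φ⁻¹`, the offset `ΔW = 𝔼[W₀] − W*` satisfies
`‖ΔW‖_F ≤ M_V (M_x M_φ ‖η I_r − Σ_φ⁻¹‖₂ + ‖Σ_φ⁻¹‖₂ ‖M_Q − M_D‖_F)`. -/
theorem offset_boundary_initial_weights (d m k r : ℕ)
    (𝓓 Q : Measure (EuclideanSpace ℝ (Fin d)))
    [IsProbabilityMeasure 𝓓] [IsProbabilityMeasure Q]
    (WV : Matrix (Fin m) (Fin d) ℝ) (M_V : ℝ) (hWV : frobNorm WV ≤ M_V)
    (WK : Matrix (Fin k) (Fin d) ℝ)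
    (φ : EuclideanSpace ℝ (Fin k) → EuclideanSpace ℝ (Fin r)) (hφ : Measurable φ)
    (Mx Mφ : ℝ)
    (hMxD : ∀ᵐ x ∂𝓓, ‖x‖ ≤ Mx) (hMxQ : ∀ᵐ x ∂Q, ‖x‖ ≤ Mx)
    (hMφD : ∀ᵐ x ∂𝓓, ‖featOut WK φ x‖ ≤ Mφ) (hMφQ : ∀ᵐ x ∂Q, ‖featOut WK φ x‖ ≤ Mφ)
    (MQ MD : Matrix (Fin d) (Fin r) ℝ)
    (hMQ : ∀ b s, MQ b s = ∫ x, x b * featOut WK φ x s ∂Q)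
    (hMD : ∀ b s, MD b s = ∫ x, x b * featOut WK φ x s ∂𝓓)
    (covφ : Matrix (Fin r) (Fin r) ℝ)
    (hcovφ : ∀ s t, covφ s t = ∫ x, featOut WK φ x s * featOut WK φ x t ∂𝓓)
    (hinv : IsUnit covφ)
    (η : ℝ) (hη : 0 < η)
    (EW₀ Wstar ΔW : Matrix (Fin m) (Fin r) ℝ)
    (hEW₀ : EW₀ = η • (WV * MQ))
    (hWstar : Wstar = WV * MD * covφ⁻¹)
    (hΔW : ΔW = EW₀ - Wstar) :
    frobNorm ΔW
      ≤ M_V * (Mx * Mφ * specNorm (η • (1 : Matrix (Fin r) (Fin r) ℝ) - covφ⁻¹)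
                + specNorm covφ⁻¹ * frobNorm (MQ - MD)) :=
  offset_boundary_initial_weights_general d m k r Q WV M_V hWV WK φ hφ Mx Mφ hMxQ hMφQ MQ MD hMQ
    covφ η EW₀ Wstar ΔW hEW₀ hWstar hΔW
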